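/- arXiv:1511.04271 — 3 statements merged into one kernel-verified Lean document; each statement's English description precedes it below -/
import Mathlib

section
/- Order-theoretic form of Proposition 3.8: let B be a complete lattice which is both join-perfect and meet-perfect, and let π : B → B be a monotone map such that for every completely meet-prime element m of B, π(⊥) ≤ m implies π(■_π(m)) ≤ m. Then π(u) = π(⊥) ⊔ ◇_π(u) for every u ∈ B, and consequently π(u ⊔ v) ≤ π(u) ⊔ π(v) for all u, v ∈ B (indeed π is completely additive: it preserves all nonempty suprema). -/
/-- An element is completely join-prime. -/
def CJPrime {C : Type*} [CompleteLattice C] (j : C) : Prop :=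
  j ≠ ⊥ ∧ ∀ S : Set C, j ≤ sSup S → ∃ s ∈ S, j ≤ s

/-- An element is completely meet-prime. -/
def CMPrime {C : Type*} [CompleteLattice C] (m : C) : Prop :=
  m ≠ ⊤ ∧ ∀ S : Set C, sInf S ≤ m → ∃ s ∈ S, s ≤ m

/-- ◇_f(u) = ⋁ { f j | j completely join-prime, j ≤ u }. -/
def diam {C D : Type*} [CompleteLattice C] [CompleteLattice D]
    (f : C → D) (u : C) : D :=
  sSup (f '' {j | CJPrime j ∧ j ≤ u})

/-- ■_f(v) = ⋁ { j | j completely join-prime, f j ≤ v }. -/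
def bsq {C D : Type*} [CompleteLattice C] [CompleteLattice D]
    (f : C → D) (v : D) : C :=
  sSup {j | CJPrime j ∧ f j ≤ v}

/-- □_g(u) = ⋀ { g m | m completely meet-prime, u ≤ m }. -/
def boxg {C D : Type*} [CompleteLattice C] [CompleteLattice D]
    (g : C → D) (u : C) : D :=
  sInf (g '' {m | CMPrime m ∧ u ≤ m})

/-- ◆_g(v) = ⋀ { m | m completely meet-prime, v ≤ g m }. -/
def bdiam {C D : Type*} [CompleteLattice C] [CompleteLattice D]
    (g : C → D) (v : D) : C :=
  sInf {m | CMPrime m ∧ v ≤ g m}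

/-- Every element is the sup of the completely join-primes below it. -/
def JoinPerfect (C : Type*) [CompleteLattice C] : Prop :=
  ∀ u : C, u = sSup {j | CJPrime j ∧ j ≤ u}

/-- Every element is the inf of the completely meet-primes above it. -/
def MeetPerfect (C : Type*) [CompleteLattice C] : Prop :=
  ∀ u : C, u = sInf {m | CMPrime m ∧ u ≤ m}

/-- `(C, e)` is a canonical extension of the bounded distributive lattice `A`. -/
structure IsCanonicalExtension {A C : Type*} [DistribLattice A] [BoundedOrder A]
    [CompleteLattice C] (e : A → C) : Prop where
  injective : Function.Injective e
  map_bot : e ⊥ = ⊥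
  map_top : e ⊤ = ⊤
  map_inf : ∀ a b : A, e (a ⊓ b) = e a ⊓ e b
  map_sup : ∀ a b : A, e (a ⊔ b) = e a ⊔ e b
  dense_joinOfMeets : ∀ u : C, ∃ 𝒮 : Set (Set A),
      u = sSup ((fun S => sInf (e '' S)) '' 𝒮)
  dense_meetOfJoins : ∀ u : C, ∃ 𝒮 : Set (Set A),
      u = sInf ((fun S => sSup (e '' S)) '' 𝒮)
  compact : ∀ S T : Set A, sInf (e '' S) ≤ sSup (e '' T) →
      ∃ F : Finset A, ↑F ⊆ S ∧ ∃ G : Finset A, ↑G ⊆ T ∧ F.inf id ≤ G.sup id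

/-- Closed elements of the canonical extension: meets of subsets of `e(A)`. -/
def ClosedElem {A C : Type*} [CompleteLattice C] (e : A → C) (x : C) : Prop :=
  ∃ S : Set A, x = sInf (e '' S)

/-- Open elements of the canonical extension: joins of subsets of `e(A)`. -/
def OpenElem {A C : Type*} [CompleteLattice C] (e : A → C) (x : C) : Prop :=
  ∃ S : Set A, x = sSup (e '' S)

/-- Nonempty downward-directed family. -/
def DownDir {C : Type*} [Preorder C] (𝒞 : Set C) : Prop :=
  𝒞.Nonempty ∧ ∀ x ∈ 𝒞, ∀ y ∈ 𝒞, ∃ z ∈ 𝒞, z ≤ x ∧ z ≤ y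

/-- Nonempty upward-directed family. -/
def UpDir {C : Type*} [Preorder C] (𝒪 : Set C) : Prop :=
  𝒪.Nonempty ∧ ∀ x ∈ 𝒪, ∀ y ∈ 𝒪, ∃ z ∈ 𝒪, x ≤ z ∧ y ≤ z

/-- `h` preserves down-directed meets of closed elements. -/
def ClosedEsakia {A C D : Type*} [CompleteLattice C] [CompleteLattice D]
    (e : A → C) (h : C → D) : Prop :=
  ∀ 𝒞 : Set C, DownDir 𝒞 → (∀ c ∈ 𝒞, ClosedElem e c) →
    h (sInf 𝒞) = sInf (h '' 𝒞)

/-- `h` preserves up-directed joins of open elements. -/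
def OpenEsakia {A C D : Type*} [CompleteLattice C] [CompleteLattice D]
    (e : A → C) (h : C → D) : Prop :=
  ∀ 𝒪 : Set C, UpDir 𝒪 → (∀ o ∈ 𝒪, OpenElem e o) →
    h (sSup 𝒪) = sSup (h '' 𝒪)


/-!
On a join-perfect lattice, `◇_π` is left adjoint to `■_π` as soon as `π` is monotone, so
`◇_π u ≤ m` gives `u ≤ ■_π m`. For a completely meet-prime `m` above `π ⊥ ⊔ ◇_π u` the hypothesis
then yields `π u ≤ π (■_π m) ≤ m`, and meet-perfectness turns this into `π u ≤ π ⊥ ⊔ ◇_π u`; the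
reverse inequality is monotonicity. Being a left adjoint, `◇_π` preserves all suprema, hence
`π = π ⊥ ⊔ ◇_π` preserves all nonempty ones.
-/

section PerfectLattice

variable {C D : Type*} [CompleteLattice C] [CompleteLattice D]

theorem diam_le_apply {f : C → D} (hf : Monotone f) (u : C) : diam f u ≤ f u :=
  sSup_le <| by
    rintro _ ⟨j, ⟨-, hju⟩, rfl⟩
    exact hf hju

theorem gc_diam_bsq (hC : JoinPerfect C) {f : C → D} (hf : Monotone f) :
    GaloisConnection (diam f) (bsq f) := by
  intro u v
  constructor
  · intro h
    rw [hC u]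
    refine sSup_le_sSup fun j ⟨hj, hju⟩ => ⟨hj, le_trans ?_ h⟩
    exact le_sSup ⟨j, ⟨hj, hju⟩, rfl⟩
  · intro h
    refine sSup_le ?_
    rintro _ ⟨j, ⟨hj, hju⟩, rfl⟩
    obtain ⟨j', ⟨-, hj'v⟩, hjj'⟩ := hj.2 _ (hju.trans h)
    exact (hf hjj').trans hj'v

theorem le_of_forall_cmPrime (hC : MeetPerfect C) {x y : C}
    (h : ∀ m : C, CMPrime m → y ≤ m → x ≤ m) : x ≤ y := by
  rw [hC y]
  exact le_sInf fun m ⟨hm, hym⟩ => h m hm hym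

end PerfectLattice

theorem map_sSup_of_eq_sup_left_adjoint {α β : Type*} [CompleteLattice α] [CompleteLattice β]
    {f l : α → β} {u : β → α} (gc : GaloisConnection l u) {a : β} (hf : ∀ x, f x = a ⊔ l x)
    {S : Set α} (hS : S.Nonempty) : f (sSup S) = sSup (f '' S) := by
  rw [sSup_image, hf, gc.l_sSup, sup_biSup hS]
  simp only [hf]

theorem apply_eq_apply_bot_sup_diam {B : Type*} [CompleteLattice B]
    (hBj : JoinPerfect B) (hBm : MeetPerfect B) {π : B → B} (hπ : Monotone π)
    (hpc : ∀ m : B, CMPrime m → π ⊥ ≤ m → π (bsq π m) ≤ m) (u : B) :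
    π u = π ⊥ ⊔ diam π u := by
  refine le_antisymm ?_ (sup_le (hπ bot_le) (diam_le_apply hπ u))
  refine le_of_forall_cmPrime hBm fun m hm hle => ?_
  have hu : u ≤ bsq π m := (gc_diam_bsq hBj hπ).le_u (le_sup_right.trans hle)
  exact (hπ hu).trans (hpc m hm (le_sup_left.trans hle))

/-- Order-theoretic form of Proposition 3.8: if `π` validates the
pseudo-correspondent on a join- and meet-perfect complete lattice, then
`π u = π ⊥ ⊔ ◇_π u` for all `u`; hence `π` is (completely) additive. -/
theorem stmt17 {B : Type*} [CompleteLattice B]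
    (hBj : JoinPerfect B) (hBm : MeetPerfect B)
    (π : B → B) (hπ : Monotone π)
    (hpc : ∀ m : B, CMPrime m → π ⊥ ≤ m → π (bsq π m) ≤ m) :
    (∀ u : B, π u = π ⊥ ⊔ diam π u) ∧
    (∀ u v : B, π (u ⊔ v) ≤ π u ⊔ π v) ∧
    (∀ S : Set B, S.Nonempty → π (sSup S) = sSup (π '' S)) := by
  have key := apply_eq_apply_bot_sup_diam hBj hBm hπ hpc
  have additive : ∀ S : Set B, S.Nonempty → π (sSup S) = sSup (π '' S) := fun S hS =>
    map_sSup_of_eq_sup_left_adjoint (gc_diam_bsq hBj hπ) key hS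
  refine ⟨key, fun u v => ?_, additive⟩
  rw [← sSup_pair, additive _ (Set.insert_nonempty u {v}), Set.image_pair, sSup_pair]
end

section
/- Right-handed topological Ackermann lemma (semantic form of Proposition 8.4): let (C, e) be a canonical extension of a bounded distributive lattice A, let α be a closed element of C, let n be a natural number, and for each i < n let β_i, γ_i : C → C be such that β_i is monotone, β_i(e a) is closed for every a ∈ A, and β_i(sInf 𝒞) = sInf (β_i '' 𝒞) for every down-directed family 𝒞 of closed elements of C, while γ_i is antitone, γ_i(e a) is open for every a ∈ A, and γ_i(sInf 𝒞) = sSup (γ_i '' 𝒞) for every down-directed family 𝒞 of closed elements of C. Then the following are equivalent: (1) β_i(α) ≤ γ_i(α) for all i < n; (2) there exists a ∈ A such that α ≤ e a and β_i(e a) ≤ γ_i(e a) for all i < n. -/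
/-!
A closed element `x` is the meet of the down-directed family of the `e a` above it. The Esakia
conditions turn `β x ≤ γ x` into "a directed meet of closed elements lies below a directed join of
open elements", and compactness then yields a single `e a` above `x` with `β (e a) ≤ γ (e a)`.
Since `β` is monotone and `γ` antitone, such an `a` can be decreased at will, so the finitely
many `a`'s obtained for the pairs `β i, γ i` have a common lower bound that works for all `i`.
-/

section Directed

variable {C D : Type*}

theorem DownDir.image_of_monotone [Preorder C] [Preorder D] {𝒞 : Set C} (h : DownDir 𝒞)
    {f : C → D} (hf : Monotone f) : DownDir (f '' 𝒞) := by
  refine ⟨h.1.image f, ?_⟩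
  rintro _ ⟨x, hx, rfl⟩ _ ⟨y, hy, rfl⟩
  obtain ⟨z, hz, hzx, hzy⟩ := h.2 x hx y hy
  exact ⟨f z, Set.mem_image_of_mem f hz, hf hzx, hf hzy⟩

theorem DownDir.image_of_antitone [Preorder C] [Preorder D] {𝒞 : Set C} (h : DownDir 𝒞)
    {f : C → D} (hf : Antitone f) : UpDir (f '' 𝒞) := by
  refine ⟨h.1.image f, ?_⟩
  rintro _ ⟨x, hx, rfl⟩ _ ⟨y, hy, rfl⟩
  obtain ⟨z, hz, hzx, hzy⟩ := h.2 x hx y hy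
  exact ⟨f z, Set.mem_image_of_mem f hz, hf hzx, hf hzy⟩

theorem DownDir.exists_le_finset_inf [SemilatticeInf C] [OrderTop C] {𝒞 : Set C}
    (h : DownDir 𝒞) {ι : Type*} (s : Finset ι) (f : ι → C)
    (hf : ∀ i ∈ s, ∃ c ∈ 𝒞, c ≤ f i) : ∃ c ∈ 𝒞, c ≤ s.inf f :=
  Finset.inf_induction (p := fun u => ∃ c ∈ 𝒞, c ≤ u) (h.1.imp fun _ hc => ⟨hc, le_top⟩)
    (fun _ ⟨c, hc, hcu⟩ _ ⟨d, hd, hdv⟩ =>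
      let ⟨z, hz, hzc, hzd⟩ := h.2 c hc d hd
      ⟨z, hz, le_inf (hzc.trans hcu) (hzd.trans hdv)⟩)
    hf

theorem UpDir.exists_finset_sup_le [SemilatticeSup C] [OrderBot C] {𝒪 : Set C}
    (h : UpDir 𝒪) {ι : Type*} (s : Finset ι) (f : ι → C)
    (hf : ∀ i ∈ s, ∃ o ∈ 𝒪, f i ≤ o) : ∃ o ∈ 𝒪, s.sup f ≤ o :=
  Finset.sup_induction (p := fun u => ∃ o ∈ 𝒪, u ≤ o) (h.1.imp fun _ ho => ⟨ho, bot_le⟩)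
    (fun _ ⟨o, ho, huo⟩ _ ⟨p, hp, hvp⟩ =>
      let ⟨z, hz, hoz, hpz⟩ := h.2 o ho p hp
      ⟨z, hz, sup_le (huo.trans hoz) (hvp.trans hpz)⟩)
    hf

end Directed

section ClosedOpen

variable {A C : Type*} [CompleteLattice C] {e : A → C}

theorem ClosedElem.sInf_image_setOf_le {x : C} (hx : ClosedElem e x) :
    sInf (e '' {a | x ≤ e a}) = x := by
  obtain ⟨S, rfl⟩ := hx
  refine le_antisymm (sInf_le_sInf (Set.image_mono fun s hs => sInf_le ⟨s, hs, rfl⟩)) ?_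
  exact le_sInf (by rintro _ ⟨a, ha, rfl⟩; exact ha)

theorem OpenElem.sSup_image_setOf_le {x : C} (hx : OpenElem e x) :
    sSup (e '' {a | e a ≤ x}) = x := by
  obtain ⟨S, rfl⟩ := hx
  refine le_antisymm ?_ (sSup_le_sSup (Set.image_mono fun s hs => le_sSup ⟨s, hs, rfl⟩))
  exact sSup_le (by rintro _ ⟨a, ha, rfl⟩; exact ha)

end ClosedOpen

namespace IsCanonicalExtension

variable {A C : Type*} [DistribLattice A] [BoundedOrder A] [CompleteLattice C] {e : A → C}

def toBoundedLatticeHom (hce : IsCanonicalExtension e) : BoundedLatticeHom A C where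
  toFun := e
  map_sup' := hce.map_sup
  map_inf' := hce.map_inf
  map_top' := hce.map_top
  map_bot' := hce.map_bot

theorem monotone (hce : IsCanonicalExtension e) : Monotone e :=
  OrderHomClass.mono hce.toBoundedLatticeHom

theorem map_finset_inf (hce : IsCanonicalExtension e) {ι : Type*} (s : Finset ι) (f : ι → A) :
    e (s.inf f) = s.inf (e ∘ f) :=
  _root_.map_finset_inf hce.toBoundedLatticeHom s f

theorem map_finset_sup (hce : IsCanonicalExtension e) {ι : Type*} (s : Finset ι) (f : ι → A) :
    e (s.sup f) = s.sup (e ∘ f) :=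
  _root_.map_finset_sup hce.toBoundedLatticeHom s f

theorem downDir_image_setOf_le (hce : IsCanonicalExtension e) (x : C) :
    DownDir (e '' {a | x ≤ e a}) := by
  refine ⟨⟨e ⊤, ⊤, by simp [hce.map_top], rfl⟩, ?_⟩
  rintro _ ⟨a, ha, rfl⟩ _ ⟨b, hb, rfl⟩
  refine ⟨e (a ⊓ b), ⟨a ⊓ b, ?_, rfl⟩, hce.monotone inf_le_left, hce.monotone inf_le_right⟩
  show x ≤ e (a ⊓ b)
  rw [hce.map_inf]
  exact le_inf ha hb

theorem exists_le_of_sInf_le_sSup (hce : IsCanonicalExtension e) {𝒞 𝒪 : Set C}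
    (h𝒞 : DownDir 𝒞) (h𝒞c : ∀ c ∈ 𝒞, ClosedElem e c)
    (h𝒪 : UpDir 𝒪) (h𝒪o : ∀ o ∈ 𝒪, OpenElem e o) (hle : sInf 𝒞 ≤ sSup 𝒪) :
    ∃ c ∈ 𝒞, ∃ o ∈ 𝒪, c ≤ o := by
  set S := {a | ∃ c ∈ 𝒞, c ≤ e a}
  set T := {a | ∃ o ∈ 𝒪, e a ≤ o}
  have hS : sInf (e '' S) ≤ sInf 𝒞 := le_sInf fun c hc =>
    calc sInf (e '' S) ≤ sInf (e '' {a | c ≤ e a}) :=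
          sInf_le_sInf (Set.image_mono fun _ ha => ⟨c, hc, ha⟩)
      _ = c := (h𝒞c c hc).sInf_image_setOf_le
  have hT : sSup 𝒪 ≤ sSup (e '' T) := sSup_le fun o ho =>
    calc o = sSup (e '' {a | e a ≤ o}) := (h𝒪o o ho).sSup_image_setOf_le.symm
      _ ≤ sSup (e '' T) := sSup_le_sSup (Set.image_mono fun _ ha => ⟨o, ho, ha⟩)
  obtain ⟨F, hFS, G, hGT, hFG⟩ := hce.compact S T (hS.trans (hle.trans hT))
  obtain ⟨c, hc, hcF⟩ := h𝒞.exists_le_finset_inf F e fun _ hx => hFS hx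
  obtain ⟨o, ho, hGo⟩ := h𝒪.exists_finset_sup_le G e fun _ hy => hGT hy
  refine ⟨c, hc, o, ho, ?_⟩
  calc c ≤ F.inf e := hcF
    _ = e (F.inf id) := (hce.map_finset_inf F id).symm
    _ ≤ e (G.sup id) := hce.monotone hFG
    _ = G.sup e := hce.map_finset_sup G id
    _ ≤ o := hGo

theorem exists_le_apply_le_of_apply_le (hce : IsCanonicalExtension e) {x : C}
    (hx : ClosedElem e x) {β γ : C → C}
    (hβ : Monotone β) (hβcl : ∀ a, ClosedElem e (β (e a))) (hβEs : ClosedEsakia e β)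
    (hγ : Antitone γ) (hγop : ∀ a, OpenElem e (γ (e a)))
    (hγEs : ∀ 𝒞 : Set C, DownDir 𝒞 → (∀ c ∈ 𝒞, ClosedElem e c) → γ (sInf 𝒞) = sSup (γ '' 𝒞))
    (hle : β x ≤ γ x) : ∃ a, x ≤ e a ∧ β (e a) ≤ γ (e a) := by
  set 𝒞 := e '' {a | x ≤ e a}
  have h𝒞 : DownDir 𝒞 := hce.downDir_image_setOf_le x
  have h𝒞c : ∀ c ∈ 𝒞, ClosedElem e c := by
    rintro _ ⟨a, -, rfl⟩
    exact ⟨{a}, by simp⟩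
  have hle' : sInf (β '' 𝒞) ≤ sSup (γ '' 𝒞) := by
    rwa [← hβEs 𝒞 h𝒞 h𝒞c, ← hγEs 𝒞 h𝒞 h𝒞c, hx.sInf_image_setOf_le]
  obtain ⟨_, ⟨_, ⟨a₁, ha₁, rfl⟩, rfl⟩, _, ⟨_, ⟨a₂, ha₂, rfl⟩, rfl⟩, h₁₂⟩ :=
    hce.exists_le_of_sInf_le_sSup (h𝒞.image_of_monotone hβ)
      (by rintro _ ⟨_, ⟨a, -, rfl⟩, rfl⟩; exact hβcl a) (h𝒞.image_of_antitone hγ)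
      (by rintro _ ⟨_, ⟨a, -, rfl⟩, rfl⟩; exact hγop a) hle'
  refine ⟨a₁ ⊓ a₂, by rw [hce.map_inf]; exact le_inf ha₁ ha₂, ?_⟩
  calc β (e (a₁ ⊓ a₂)) ≤ β (e a₁) := hβ (hce.monotone inf_le_left)
    _ ≤ γ (e a₂) := h₁₂
    _ ≤ γ (e (a₁ ⊓ a₂)) := hγ (hce.monotone inf_le_right)

end IsCanonicalExtension

/-- Right-handed topological Ackermann lemma (semantic form of Proposition 8.4). -/
theorem stmt18 {A C : Type*} [DistribLattice A] [BoundedOrder A] [CompleteLattice C]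
    (e : A → C) (hce : IsCanonicalExtension e)
    (α : C) (hα : ClosedElem e α) (n : ℕ) (β γ : Fin n → C → C)
    (hβmono : ∀ i, Monotone (β i))
    (hβcl : ∀ i, ∀ a : A, ClosedElem e (β i (e a)))
    (hβEs : ∀ i, ∀ 𝒞 : Set C, DownDir 𝒞 → (∀ c ∈ 𝒞, ClosedElem e c) →
        β i (sInf 𝒞) = sInf (β i '' 𝒞))
    (hγanti : ∀ i, Antitone (γ i))
    (hγop : ∀ i, ∀ a : A, OpenElem e (γ i (e a)))
    (hγEs : ∀ i, ∀ 𝒞 : Set C, DownDir 𝒞 → (∀ c ∈ 𝒞, ClosedElem e c) →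
        γ i (sInf 𝒞) = sSup (γ i '' 𝒞)) :
    (∀ i, β i α ≤ γ i α) ↔
      ∃ a : A, α ≤ e a ∧ ∀ i, β i (e a) ≤ γ i (e a) := by
  constructor
  · intro hle
    choose a hαa hab using fun i => hce.exists_le_apply_le_of_apply_le hα (hβmono i) (hβcl i)
      (hβEs i) (hγanti i) (hγop i) (hγEs i) (hle i)
    refine ⟨Finset.univ.inf a, ?_, fun i => ?_⟩
    · rw [hce.map_finset_inf]
      exact Finset.le_inf fun i _ => hαa i
    · have hi : e (Finset.univ.inf a) ≤ e (a i) := hce.monotone (Finset.inf_le (Finset.mem_univ i))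
      exact (hβmono i hi).trans ((hab i).trans (hγanti i hi))
  · rintro ⟨a, hαa, hab⟩ i
    exact (hβmono i hαa).trans ((hab i).trans (hγanti i hαa))
end

section
/- Left-handed topological Ackermann lemma (semantic form of Proposition 8.5): let (C, e) be a canonical extension of a bounded distributive lattice A, let α be an open element of C, let n be a natural number, and for each i < n let β_i, γ_i : C → C be such that β_i is antitone, β_i(e a) is closed for every a ∈ A, and β_i(sSup 𝒪) = sInf (β_i '' 𝒪) for every up-directed family 𝒪 of open elements of C, while γ_i is monotone, γ_i(e a) is open for every a ∈ A, and γ_i(sSup 𝒪) = sSup (γ_i '' 𝒪) for every up-directed family 𝒪 of open elements of C. Then the following are equivalent: (1) β_i(α) ≤ γ_i(α) for all i < n; (2) there exists a ∈ A such that e a ≤ α and β_i(e a) ≤ γ_i(e a) for all i < n. -/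
/-!
Write `α` as the up-directed join of the `e a ≤ α`. The Esakia conditions turn `β i α ≤ γ i α`
into `⨅ β i (e a) ≤ ⨆ γ i (e a)`, a meet of closed elements below a join of open ones, so by
compactness finitely many of them already suffice; a common upper bound `a` of those finitely many
indices works because `β i` is antitone and `γ i` monotone. Finally take the join of the witnesses
obtained for the finitely many `i`.
-/

theorem Monotone.upDir_range {ι C : Type*} [Preorder ι] [IsDirectedOrder ι] [Nonempty ι]
    [Preorder C] {f : ι → C} (hf : Monotone f) : UpDir (Set.range f) := by
  refine ⟨Set.range_nonempty f, ?_⟩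
  rintro _ ⟨i, rfl⟩ _ ⟨j, rfl⟩
  obtain ⟨k, hik, hjk⟩ := exists_ge_ge i j
  exact ⟨f k, ⟨k, rfl⟩, hf hik, hf hjk⟩

theorem OpenElem.eq_iSup_of_le {A C : Type*} [CompleteLattice C] {e : A → C} {α : C}
    (hα : OpenElem e α) : α = ⨆ a : {a // e a ≤ α}, e a := by
  obtain ⟨S, rfl⟩ := hα
  refine le_antisymm (sSup_le ?_) (iSup_le fun a => a.2)
  rintro _ ⟨s, hs, rfl⟩
  exact le_iSup_of_le (f := fun a : {a // e a ≤ sSup (e '' S)} => e a)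
    ⟨s, le_sSup ⟨s, hs, rfl⟩⟩ le_rfl

namespace IsCanonicalExtension

variable {A C : Type*} [DistribLattice A] [BoundedOrder A] [CompleteLattice C] {e : A → C}

theorem exists_finite_iInf_le_iSup (hce : IsCanonicalExtension e) {ι κ : Type*}
    {x : ι → C} {y : κ → C}
    (hx : ∀ i, ClosedElem e (x i)) (hy : ∀ k, OpenElem e (y k)) (h : ⨅ i, x i ≤ ⨆ k, y k) :
    ∃ I : Set ι, I.Finite ∧ ∃ K : Set κ, K.Finite ∧ ⨅ i ∈ I, x i ≤ ⨆ k ∈ K, y k := by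
  choose S hS using hx
  choose T hT using hy
  have hST : sInf (e '' ⋃ i, S i) ≤ sSup (e '' ⋃ k, T k) := by
    simp_rw [sInf_image, sSup_image, iInf_iUnion, iSup_iUnion, ← sInf_image, ← sSup_image,
      ← hS, ← hT]
    exact h
  obtain ⟨F, hFS, G, hGT, hFG⟩ := hce.compact _ _ hST
  obtain ⟨I, hI, hFI⟩ := Set.finite_subset_iUnion F.finite_toSet hFS
  obtain ⟨K, hK, hGK⟩ := Set.finite_subset_iUnion G.finite_toSet hGT
  refine ⟨I, hI, K, hK, ?_⟩
  calc ⨅ i ∈ I, x i ≤ sInf (e '' F) := by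
        refine le_sInf ?_
        rintro _ ⟨a, ha, rfl⟩
        obtain ⟨i, hi, haS⟩ := Set.mem_iUnion₂.mp (hFI ha)
        calc ⨅ i ∈ I, x i ≤ x i := iInf₂_le (f := fun i _ => x i) i hi
          _ = sInf (e '' S i) := hS i
          _ ≤ e a := sInf_le ⟨a, haS, rfl⟩
    _ = e (F.inf id) := by rw [hce.map_finset_inf, Finset.inf_eq_sInf_image, Function.comp_id]
    _ ≤ e (G.sup id) := hce.monotone hFG
    _ = sSup (e '' G) := by rw [hce.map_finset_sup, Finset.sup_eq_sSup_image, Function.comp_id]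
    _ ≤ ⨆ k ∈ K, y k := by
        refine sSup_le ?_
        rintro _ ⟨b, hb, rfl⟩
        obtain ⟨k, hk, hbT⟩ := Set.mem_iUnion₂.mp (hGK hb)
        calc e b ≤ sSup (e '' T k) := le_sSup ⟨b, hbT, rfl⟩
          _ = y k := (hT k).symm
          _ ≤ ⨆ k ∈ K, y k := le_iSup₂ (f := fun k _ => y k) k hk

theorem exists_le_of_iInf_le_iSup (hce : IsCanonicalExtension e) {ι : Type*} [Preorder ι]
    [IsDirectedOrder ι] [Nonempty ι]
    {x y : ι → C} (hxa : Antitone x) (hym : Monotone y)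
    (hx : ∀ i, ClosedElem e (x i)) (hy : ∀ i, OpenElem e (y i)) (h : ⨅ i, x i ≤ ⨆ i, y i) :
    ∃ i, x i ≤ y i := by
  obtain ⟨I, hI, K, hK, hIK⟩ := hce.exists_finite_iInf_le_iSup hx hy h
  obtain ⟨j, hj⟩ := (hI.union hK).bddAbove
  refine ⟨j, ?_⟩
  calc x j ≤ ⨅ i ∈ I, x i :=
        le_iInf₂ fun i (hi : i ∈ I) => hxa (hj (Set.mem_union_left K hi))
    _ ≤ ⨆ k ∈ K, y k := hIK
    _ ≤ y j := iSup₂_le fun k (hk : k ∈ K) => hym (hj (Set.mem_union_right I hk))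

theorem exists_le_of_le_of_openElem (hce : IsCanonicalExtension e) {α : C}
    (hα : OpenElem e α) {f g : C → C} (hf : Antitone f) (hfcl : ∀ a, ClosedElem e (f (e a)))
    (hfEs : ∀ 𝒪 : Set C, UpDir 𝒪 → (∀ o ∈ 𝒪, OpenElem e o) →
      f (sSup 𝒪) = sInf (f '' 𝒪))
    (hg : Monotone g) (hgop : ∀ a, OpenElem e (g (e a))) (hgEs : OpenEsakia e g)
    (h : f α ≤ g α) : ∃ a, e a ≤ α ∧ f (e a) ≤ g (e a) := by
  let ι := {a : A // e a ≤ α}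
  have : IsDirectedOrder ι := ⟨fun a b =>
    ⟨⟨a ⊔ b, (hce.map_sup a b).trans_le (sup_le a.2 b.2)⟩,
      show a.1 ≤ a.1 ⊔ b.1 from le_sup_left, show b.1 ≤ a.1 ⊔ b.1 from le_sup_right⟩⟩
  have : Nonempty ι := ⟨⟨⊥, hce.map_bot.trans_le bot_le⟩⟩
  let u : ι → C := fun a => e a
  have hu : Monotone u := fun a b hab => hce.monotone hab
  have hαu : sSup (Set.range u) = α := by rw [sSup_range, ← hα.eq_iSup_of_le]
  have hop : ∀ o ∈ Set.range u, OpenElem e o := by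
    rintro _ ⟨a, rfl⟩
    exact ⟨{a.1}, by simp [u]⟩
  have hfα : f α = ⨅ a, f (u a) := by
    rw [← hαu, hfEs _ hu.upDir_range hop, ← Set.range_comp, sInf_range, Function.comp_def]
  have hgα : g α = ⨆ a, g (u a) := by
    rw [← hαu, hgEs _ hu.upDir_range hop, ← Set.range_comp, sSup_range, Function.comp_def]
  obtain ⟨a, ha⟩ := hce.exists_le_of_iInf_le_iSup (hf.comp_monotone hu) (hg.comp hu)
    (fun a => hfcl a.1) (fun a => hgop a.1) (hfα ▸ hgα ▸ h)
  exact ⟨a, a.2, ha⟩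

end IsCanonicalExtension

/-- Left-handed topological Ackermann lemma (semantic form of Proposition 8.5). -/
theorem stmt19 {A C : Type*} [DistribLattice A] [BoundedOrder A] [CompleteLattice C]
    (e : A → C) (hce : IsCanonicalExtension e)
    (α : C) (hα : OpenElem e α) (n : ℕ) (β γ : Fin n → C → C)
    (hβanti : ∀ i, Antitone (β i))
    (hβcl : ∀ i, ∀ a : A, ClosedElem e (β i (e a)))
    (hβEs : ∀ i, ∀ 𝒪 : Set C, UpDir 𝒪 → (∀ o ∈ 𝒪, OpenElem e o) →
        β i (sSup 𝒪) = sInf (β i '' 𝒪))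
    (hγmono : ∀ i, Monotone (γ i))
    (hγop : ∀ i, ∀ a : A, OpenElem e (γ i (e a)))
    (hγEs : ∀ i, ∀ 𝒪 : Set C, UpDir 𝒪 → (∀ o ∈ 𝒪, OpenElem e o) →
        γ i (sSup 𝒪) = sSup (γ i '' 𝒪)) :
    (∀ i, β i α ≤ γ i α) ↔
      ∃ a : A, e a ≤ α ∧ ∀ i, β i (e a) ≤ γ i (e a) := by
  have transfer : ∀ i {u v : C}, u ≤ v → β i u ≤ γ i u → β i v ≤ γ i v :=
    fun i _ _ huv h => (hβanti i huv).trans (h.trans (hγmono i huv))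
  constructor
  · intro h
    choose c hcα hc using fun i => hce.exists_le_of_le_of_openElem hα (hβanti i) (hβcl i)
      (hβEs i) (hγmono i) (hγop i) (hγEs i) (h i)
    have hle : ∀ i, e (c i) ≤ e (Finset.univ.sup c) :=
      fun i => hce.monotone (Finset.le_sup (Finset.mem_univ i))
    refine ⟨Finset.univ.sup c, ?_, fun i => transfer i (hle i) (hc i)⟩
    rw [hce.map_finset_sup]
    exact Finset.sup_le fun i _ => hcα i
  · rintro ⟨a, haα, ha⟩ i
    exact transfer i haα (ha i)
end
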